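/- For every ε > 0, the baker's map β on C × C is, modulo transpositions, a product of baker's maps each of whose supports is a cylinder set of diameter less than ε (with respect to a fixed metric inducing the product topology). -/

import Mathlib

/-- The Cantor set, modeled as infinite binary sequences. -/
abbrev C := ℕ → Bool

def shift (x : C) : C := fun n => x (n + 1)

def prepend (b : Bool) (y : C) : C
  | 0 => b
  | n + 1 => y n

/-- Concatenate a finite binary word with an infinite binary sequence. -/
def cat (u : List Bool) (w : C) : C := fun n =>
  if h : n < u.length then u.get ⟨n, h⟩ else w (n - u.length)

/-- The cylinder of all infinite sequences with prefix `u`. -/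
def cyl (u : List Bool) : Set C := Set.range (cat u)

/-- `φ` is the baker's map supported on the cylinder set `[u] × [v]`: on that cylinder it
moves the first digit after `u` of the first coordinate to just after `v` in the second
coordinate, and it is the identity elsewhere. -/
def IsBaker (u v : List Bool) (φ : Equiv.Perm (C × C)) : Prop :=
  (∀ w w' : C, φ (cat u w, cat v w') = (cat u (shift w), cat v (prepend (w 0) w'))) ∧
  ∀ p : C × C, p ∉ cyl u ×ˢ cyl v → φ p = p

/-- `φ` is a transposition of two disjoint cylinder sets in `C × C`: it swaps them by
prefix replacement and fixes everything else. -/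
def IsCylTransposition (φ : Equiv.Perm (C × C)) : Prop :=
  ∃ u v u' v' : List Bool,
    (cyl u ×ˢ cyl v) ∩ (cyl u' ×ˢ cyl v') = ∅ ∧
    (∀ w w' : C, φ (cat u w, cat v w') = (cat u' w, cat v' w')) ∧
    (∀ w w' : C, φ (cat u' w, cat v' w') = (cat u w, cat v w')) ∧
    ∀ p : C × C, p ∉ (cyl u ×ˢ cyl v) ∪ (cyl u' ×ˢ cyl v') → φ p = p
/-!
Halving the support `[u] × [v]` horizontally, the baker's map on it is the transposition of
`[u0] × [v1]` and `[u1] × [v0]` composed with the baker's maps on `[u0] × [v]` and `[u1] × [v]`;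
halving it vertically, it is the transposition of `[u] × [v01]` and `[u] × [v10]` composed with
the baker's maps on `[u] × [v0]` and `[u] × [v1]`. Both identities need only be checked for the
full baker's map, since transporting a permutation of `C × C` onto `[u] × [v]` along
`(w, w') ↦ (uw, vw')` is a group homomorphism that turns baker's maps and cylinder
transpositions into baker's maps and cylinder transpositions with the words prefixed by `u`, `v`.
Alternating the two halvings `n` times writes the baker's map as a product of transpositions and
baker's maps supported on cylinders `[u] × [v]` with `|u|, |v| ≥ n`.
-/

@[simp] lemma prepend_zero (b : Bool) (y : C) : prepend b y 0 = b := rfl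

@[simp] lemma shift_prepend (b : Bool) (y : C) : shift (prepend b y) = y := rfl

@[simp] lemma prepend_shift (x : C) : prepend (x 0) (shift x) = x := by
  funext n; cases n <;> rfl

lemma cat_append (u a : List Bool) (w : C) : cat (u ++ a) w = cat u (cat a w) := by
  funext n
  unfold cat
  by_cases h : n < u.length
  · simp [h, List.getElem_append_left h, show n < u.length + a.length by omega]
  · have hsplit : n < u.length + a.length ↔ n - u.length < a.length := by omega
    simp [h, List.getElem_append_right (Nat.le_of_not_lt h), Nat.sub_add_eq, hsplit]

@[simp] lemma cat_nil (w : C) : cat [] w = w := by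
  funext n; simp [cat]

lemma cat_singleton (b : Bool) (w : C) : cat [b] w = prepend b w := by
  funext n; cases n <;> simp [cat, prepend]

lemma cat_pair (a b : Bool) (w : C) : cat [a, b] w = prepend a (prepend b w) := by
  rw [show [a, b] = [a] ++ [b] from rfl, cat_append, cat_singleton, cat_singleton]

lemma cat_injective (u : List Bool) : Function.Injective (cat u) := by
  intro w w' h
  funext n
  simpa [cat] using congrFun h (n + u.length)

lemma cat_mem_cyl (u : List Bool) (w : C) : cat u w ∈ cyl u := ⟨w, rfl⟩

lemma cat_mem_cyl_append_iff {u a : List Bool} {x : C} :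
    cat u x ∈ cyl (u ++ a) ↔ x ∈ cyl a := by
  constructor
  · rintro ⟨w, hw⟩
    rw [cat_append] at hw
    exact ⟨w, cat_injective u hw⟩
  · rintro ⟨w, rfl⟩
    exact ⟨w, cat_append u a w⟩

lemma mem_cyl_append_iff {u a : List Bool} {x : C} :
    x ∈ cyl (u ++ a) ↔ ∃ y ∈ cyl a, cat u y = x := by
  constructor
  · rintro ⟨w, rfl⟩
    exact ⟨cat a w, cat_mem_cyl a w, (cat_append u a w).symm⟩
  · rintro ⟨y, hy, rfl⟩
    exact cat_mem_cyl_append_iff.2 hy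

lemma mem_cyl_singleton {b : Bool} {x : C} : x ∈ cyl [b] ↔ x 0 = b := by
  constructor
  · rintro ⟨w, rfl⟩
    rw [cat_singleton, prepend]
  · intro h
    exact ⟨shift x, by rw [cat_singleton, ← h, prepend_shift]⟩

lemma mem_cyl_pair {a b : Bool} {x : C} : x ∈ cyl [a, b] ↔ x 0 = a ∧ x 1 = b := by
  constructor
  · rintro ⟨w, rfl⟩
    rw [cat_pair]
    exact ⟨rfl, rfl⟩
  · rintro ⟨ha, hb⟩
    refine ⟨shift (shift x), ?_⟩
    rw [cat_pair, ← ha, ← hb]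
    funext n
    rcases n with _ | _ | n <;> rfl

lemma mem_cyl_nil (x : C) : x ∈ cyl [] := ⟨x, cat_nil x⟩

def catEmbedding (u v : List Bool) : C × C ↪ C × C :=
  Function.Embedding.prodMap ⟨cat u, cat_injective u⟩ ⟨cat v, cat_injective v⟩

lemma catEmbedding_apply (u v : List Bool) (q : C × C) :
    catEmbedding u v q = (cat u q.1, cat v q.2) := rfl

lemma range_catEmbedding (u v : List Bool) : Set.range (catEmbedding u v) = cyl u ×ˢ cyl v :=
  Set.range_prodMap

noncomputable def onCyl (u v : List Bool) : Equiv.Perm (C × C) →* Equiv.Perm (C × C) :=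
  Equiv.Perm.viaEmbeddingHom (catEmbedding u v)

section onCyl

variable {u v : List Bool} (σ : Equiv.Perm (C × C))

lemma onCyl_apply_catEmbedding (q : C × C) :
    onCyl u v σ (catEmbedding u v q) = catEmbedding u v (σ q) :=
  σ.viaEmbedding_apply _ q

lemma onCyl_apply_cat (w w' : C) :
    onCyl u v σ (cat u w, cat v w') = (cat u (σ (w, w')).1, cat v (σ (w, w')).2) :=
  onCyl_apply_catEmbedding σ (w, w')

lemma onCyl_apply_of_notMem {p : C × C} (hp : p ∉ cyl u ×ˢ cyl v) : onCyl u v σ p = p :=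
  σ.viaEmbedding_apply_of_notMem _ p (by rwa [range_catEmbedding])

lemma onCyl_apply_eq_self {p : C × C} (h : ∀ q, catEmbedding u v q = p → σ q = q) :
    onCyl u v σ p = p := by
  by_cases hp : p ∈ Set.range (catEmbedding u v)
  · obtain ⟨q, rfl⟩ := hp
    rw [onCyl_apply_catEmbedding, h q rfl]
  · exact σ.viaEmbedding_apply_of_notMem _ p hp

end onCyl

lemma catEmbedding_mem_prod_iff {u v a b : List Bool} {q : C × C} :
    catEmbedding u v q ∈ cyl (u ++ a) ×ˢ cyl (v ++ b) ↔ q ∈ cyl a ×ˢ cyl b := by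
  simp only [catEmbedding_apply, Set.mem_prod, cat_mem_cyl_append_iff]

lemma exists_catEmbedding_eq_of_mem_prod {u v a b : List Bool} {p : C × C}
    (hp : p ∈ cyl (u ++ a) ×ˢ cyl (v ++ b)) :
    ∃ q ∈ cyl a ×ˢ cyl b, catEmbedding u v q = p := by
  obtain ⟨x, hx, hpx⟩ := mem_cyl_append_iff.1 hp.1
  obtain ⟨y, hy, hpy⟩ := mem_cyl_append_iff.1 hp.2
  exact ⟨(x, y), ⟨hx, hy⟩, Prod.ext hpx hpy⟩

lemma IsBaker.onCyl {a b : List Bool} {φ : Equiv.Perm (C × C)} (h : IsBaker a b φ)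
    (u v : List Bool) : IsBaker (u ++ a) (v ++ b) (onCyl u v φ) := by
  obtain ⟨hcyl, hfix⟩ := h
  refine ⟨fun w w' => ?_, fun p hp => onCyl_apply_eq_self φ fun q hq => hfix q fun hq' => ?_⟩
  · simp only [cat_append, onCyl_apply_cat, hcyl]
  · exact hp (hq ▸ catEmbedding_mem_prod_iff.2 hq')

lemma IsCylTransposition.onCyl {φ : Equiv.Perm (C × C)} (h : IsCylTransposition φ)
    (u v : List Bool) : IsCylTransposition (onCyl u v φ) := by
  obtain ⟨a, b, a', b', hdisj, hto, hfro, hfix⟩ := h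
  refine ⟨u ++ a, v ++ b, u ++ a', v ++ b', ?_, fun w w' => ?_, fun w w' => ?_,
    fun p hp => onCyl_apply_eq_self φ fun q hq => hfix q fun hq' => hp ?_⟩
  · refine Set.eq_empty_iff_forall_notMem.2 fun p ⟨hp, hp'⟩ => ?_
    obtain ⟨q, hq, rfl⟩ := exists_catEmbedding_eq_of_mem_prod hp
    exact hdisj.subset ⟨hq, catEmbedding_mem_prod_iff.1 hp'⟩
  · simp only [cat_append, onCyl_apply_cat, hto]
  · simp only [cat_append, onCyl_apply_cat, hfro]
  · subst hq
    exact hq'.imp catEmbedding_mem_prod_iff.2 catEmbedding_mem_prod_iff.2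

def bakerMap : Equiv.Perm (C × C) where
  toFun p := (shift p.1, prepend (p.1 0) p.2)
  invFun p := (prepend (p.2 0) p.1, shift p.2)
  left_inv p := by simp
  right_inv p := by simp

def swapHeads : Equiv.Perm (C × C) :=
  Function.Involutive.toPerm (fun p => (prepend (p.2 0) (shift p.1), prepend (p.1 0) (shift p.2)))
    fun p => by simp

lemma bakerMap_apply (x y : C) : bakerMap (x, y) = (shift x, prepend (x 0) y) := rfl

lemma swapHeads_apply (x y : C) :
    swapHeads (x, y) = (prepend (y 0) (shift x), prepend (x 0) (shift y)) := rfl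

def swapFirstTwo (y : C) : C := prepend (y 1) (prepend (y 0) (shift (shift y)))

lemma swapFirstTwo_prepend_prepend (a b : Bool) (w : C) :
    swapFirstTwo (prepend a (prepend b w)) = prepend b (prepend a w) := rfl

lemma swapFirstTwo_involutive : Function.Involutive swapFirstTwo := fun y => by
  funext n; rcases n with _ | _ | n <;> rfl

lemma swapFirstTwo_eq_self {y : C} (h : y 0 = y 1) : swapFirstTwo y = y := by
  funext n; rcases n with _ | _ | n
  exacts [h.symm, h, rfl]

def swapFirstTwoSnd : Equiv.Perm (C × C) :=
  Function.Involutive.toPerm (Prod.map id swapFirstTwo)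
    fun p => Prod.ext rfl (swapFirstTwo_involutive p.2)

lemma swapFirstTwoSnd_apply (x y : C) : swapFirstTwoSnd (x, y) = (x, swapFirstTwo y) := rfl

lemma isBaker_nil_bakerMap : IsBaker [] [] bakerMap :=
  ⟨fun w w' => by simp [bakerMap], fun p hp => absurd ⟨mem_cyl_nil _, mem_cyl_nil _⟩ hp⟩

lemma isCylTransposition_swapHeads : IsCylTransposition swapHeads := by
  refine ⟨[false], [true], [true], [false], ?_, fun w w' => ?_, fun w w' => ?_,
    fun p hp => ?_⟩
  · refine Set.eq_empty_iff_forall_notMem.2 fun p ⟨hp, hp'⟩ => ?_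
    simp only [Set.mem_prod, mem_cyl_singleton] at hp hp'
    simp [hp.1] at hp'
  · simp only [cat_singleton]; rfl
  · simp only [cat_singleton]; rfl
  · obtain ⟨x, y⟩ := p
    have hhead : x 0 = y 0 := by
      simp only [Set.mem_union, Set.mem_prod, mem_cyl_singleton, not_or, not_and] at hp
      cases h1 : x 0 <;> cases h2 : y 0 <;> simp_all
    show (prepend (y 0) (shift x), prepend (x 0) (shift y)) = (x, y)
    exact Prod.ext (by rw [← hhead]; exact prepend_shift x) (by rw [hhead]; exact prepend_shift y)

lemma isCylTransposition_swapFirstTwoSnd : IsCylTransposition swapFirstTwoSnd := by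
  refine ⟨[], [false, true], [], [true, false], ?_, fun w w' => ?_, fun w w' => ?_,
    fun p hp => ?_⟩
  · refine Set.eq_empty_iff_forall_notMem.2 fun p ⟨hp, hp'⟩ => ?_
    simp only [Set.mem_prod, mem_cyl_pair] at hp hp'
    simp [hp.2.1] at hp'
  · simp only [cat_pair, cat_nil]; rfl
  · simp only [cat_pair, cat_nil]; rfl
  · have hdigits : p.2 0 = p.2 1 := by
      simp only [Set.mem_union, Set.mem_prod, mem_cyl_pair, not_or, not_and] at hp
      cases h1 : p.2 0 <;> cases h2 : p.2 1 <;> simp_all [mem_cyl_nil]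
    exact Prod.ext rfl (swapFirstTwo_eq_self hdigits)

section halving

variable (σ : Equiv.Perm (C × C)) {b c : Bool}

lemma onCyl_singleton_nil_apply (w y : C) :
    onCyl [b] [] σ (prepend b w, y) = (prepend b (σ (w, y)).1, (σ (w, y)).2) := by
  simpa [cat_singleton] using onCyl_apply_cat (u := [b]) (v := []) σ w y

lemma onCyl_nil_singleton_apply (x w : C) :
    onCyl [] [b] σ (x, prepend b w) = ((σ (x, w)).1, prepend b (σ (x, w)).2) := by
  simpa [cat_singleton] using onCyl_apply_cat (u := []) (v := [b]) σ x w

lemma onCyl_singleton_nil_apply_of_ne (h : b ≠ c) (w y : C) :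
    onCyl [c] [] σ (prepend b w, y) = (prepend b w, y) :=
  onCyl_apply_of_notMem σ fun hp => h (mem_cyl_singleton.1 hp.1)

lemma onCyl_nil_singleton_apply_of_ne (h : b ≠ c) (x w : C) :
    onCyl [] [c] σ (x, prepend b w) = (x, prepend b w) :=
  onCyl_apply_of_notMem σ fun hp => h (mem_cyl_singleton.1 hp.2)

end halving

lemma bakerMap_eq_swapHeads_mul :
    bakerMap = swapHeads * onCyl [false] [] bakerMap * onCyl [true] [] bakerMap := by
  refine Equiv.ext fun ⟨x, y⟩ => ?_
  obtain ⟨b, z, rfl⟩ : ∃ b z, x = prepend b z := ⟨x 0, shift x, (prepend_shift x).symm⟩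
  cases b <;> simp [onCyl_singleton_nil_apply, onCyl_singleton_nil_apply_of_ne, bakerMap_apply,
    swapHeads_apply]

lemma bakerMap_eq_swapFirstTwoSnd_mul :
    bakerMap = swapFirstTwoSnd * onCyl [] [false] bakerMap * onCyl [] [true] bakerMap := by
  refine Equiv.ext fun ⟨x, y⟩ => ?_
  obtain ⟨b, z, rfl⟩ : ∃ b z, y = prepend b z := ⟨y 0, shift y, (prepend_shift y).symm⟩
  cases b <;> simp [onCyl_nil_singleton_apply, onCyl_nil_singleton_apply_of_ne, bakerMap_apply,
    swapFirstTwoSnd_apply, swapFirstTwo_prepend_prepend]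

def bakerPieces (m n : ℕ) : Set (Equiv.Perm (C × C)) :=
  {f | IsCylTransposition f ∨
    ∃ u v : List Bool, IsBaker u v f ∧ m ≤ u.length ∧ n ≤ v.length}

lemma onCyl_mem_bakerPieces {m n : ℕ} {f : Equiv.Perm (C × C)} (hf : f ∈ bakerPieces m n)
    (u v : List Bool) : onCyl u v f ∈ bakerPieces (m + u.length) (n + v.length) := by
  rcases hf with htransp | ⟨a, b, hab, ha, hb⟩
  · exact Or.inl (htransp.onCyl u v)
  · refine Or.inr ⟨u ++ a, v ++ b, hab.onCyl u v, ?_, ?_⟩ <;>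
      simp only [List.length_append] <;> omega

lemma onCyl_mem_closure_bakerPieces {m n : ℕ} {σ : Equiv.Perm (C × C)}
    (hσ : σ ∈ Submonoid.closure (bakerPieces m n)) (u v : List Bool) :
    onCyl u v σ ∈ Submonoid.closure (bakerPieces (m + u.length) (n + v.length)) :=
  (Submonoid.closure_le (S := (Submonoid.closure _).comap (onCyl u v))).2
    (fun _ hf => Submonoid.subset_closure (onCyl_mem_bakerPieces hf u v)) hσ

lemma bakerMap_mem_closure_bakerPieces (n : ℕ) :
    bakerMap ∈ Submonoid.closure (bakerPieces n n) := by
  induction n with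
  | zero =>
    exact Submonoid.subset_closure (Or.inr ⟨[], [], isBaker_nil_bakerMap, le_rfl, le_rfl⟩)
  | succ n ih =>
    have hleft : bakerMap ∈ Submonoid.closure (bakerPieces (n + 1) n) := by
      rw [bakerMap_eq_swapHeads_mul]
      exact mul_mem (mul_mem (Submonoid.subset_closure (Or.inl isCylTransposition_swapHeads))
        (onCyl_mem_closure_bakerPieces ih [false] [])) (onCyl_mem_closure_bakerPieces ih [true] [])
    rw [bakerMap_eq_swapFirstTwoSnd_mul]
    exact mul_mem (mul_mem (Submonoid.subset_closure (Or.inl isCylTransposition_swapFirstTwoSnd))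
      (onCyl_mem_closure_bakerPieces hleft [] [false]))
      (onCyl_mem_closure_bakerPieces hleft [] [true])

/-- With the metric `d(x, y) = 2^{-min{n : x n ≠ y n}}` on `C` and the max metric on `C × C`,
the cylinder `[u] × [v]` has diameter `2^{-min(|u|, |v|)}`. -/
theorem stmt_12 (β : Equiv.Perm (C × C))
    (hβ : ∀ x y : C, β (x, y) = (shift x, prepend (x 0) y)) :
    ∀ ε : ℝ, 0 < ε →
      ∃ L : List (Equiv.Perm (C × C)),
        β = L.prod ∧
        ∀ f ∈ L, IsCylTransposition f ∨
          ∃ u v : List Bool, IsBaker u v f ∧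
            (2 : ℝ) ^ (-(min u.length v.length : ℤ)) < ε := by
  intro ε hε
  obtain ⟨n, hn⟩ := exists_pow_lt_of_lt_one hε (by norm_num : (1 / 2 : ℝ) < 1)
  obtain ⟨L, hL, hprod⟩ :=
    Submonoid.exists_list_of_mem_closure (bakerMap_mem_closure_bakerPieces n)
  have hβ_eq : β = bakerMap := Equiv.ext fun p => hβ p.1 p.2
  refine ⟨L, hβ_eq.trans hprod.symm, fun f hf => (hL f hf).imp_right ?_⟩
  rintro ⟨u, v, hf, hu, hv⟩
  refine ⟨u, v, hf, lt_of_le_of_lt ?_ hn⟩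
  calc (2 : ℝ) ^ (-(min u.length v.length : ℤ)) ≤ 2 ^ (-(n : ℤ)) :=
        zpow_le_zpow_right₀ one_le_two (by omega)
    _ = (1 / 2) ^ n := by rw [zpow_neg, zpow_natCast, one_div, inv_pow]
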